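/- Let r ≥ 5 be a prime, let ζ be a primitive r-th root of unity in ℚ(ζ_r), and let a, b be coprime integers. If q is a prime ideal of ℤ[ζ] different from (1−ζ), then q divides at most one of the three elements A_{a,b}, B_{a,b}, C_{a,b}; that is, the only prime ideal of ℤ[ζ] that can divide two of A_{a,b}, B_{a,b}, C_{a,b} simultaneously is the prime (1−ζ) above r. -/

import Mathlib

/-! Every `1 - ζ ^ k` with `r ∤ k` is associated to `1 - ζ`, so it lies in no prime
other than `(1 - ζ)`; cancelling `ζ` and these factors, `q` would contain two of the forms
`(a + b)² = a² + 2ab + b²`, `f₁(a, b)`, `f₂(a, b)`. Forms `x² + sxy + y²` and `x² + txy + y²`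
differ by `(s - t)xy`, and each `s - t` is again a product of a power of `ζ` and such factors
(e.g. `2 - (ζ² + ζ⁻²) = (1 - ζ²)(1 - ζ⁻²)`), so `ab ∈ q`. Then one of `a, b` lies in `q`, the form
puts the other there too, and this contradicts `IsCoprime a b`. -/

open NumberField

/-- `A_{a,b} = α(a+b)²` with `α = ζ(1−ζ)(1−ζ⁻³)`, where `ζ⁻¹ = ζ^{r−1}`. -/
def freyA {R : Type*} [CommRing R] (r : ℕ) (ζ : R) (a b : ℤ) : R :=
  ζ * (1 - ζ) * (1 - ζ ^ (r - 3)) * ((a : R) + (b : R)) ^ 2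

/-- `B_{a,b} = β f₁(a,b)` with `β = (1−ζ)(1−ζ⁻¹)`, `f₁(x,y) = x² + (ζ² + ζ⁻²)xy + y²`. -/
def freyB {R : Type*} [CommRing R] (r : ℕ) (ζ : R) (a b : ℤ) : R :=
  (1 - ζ) * (1 - ζ ^ (r - 1)) *
    ((a : R) ^ 2 + (ζ ^ 2 + ζ ^ (r - 2)) * (a : R) * (b : R) + (b : R) ^ 2)

/-- `C_{a,b} = γ f₂(a,b)` with `γ = −(1−ζ²)(1−ζ⁻²)`, `f₂(x,y) = x² + (ζ + ζ⁻¹)xy + y²`. -/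
def freyC {R : Type*} [CommRing R] (r : ℕ) (ζ : R) (a b : ℤ) : R :=
  -((1 - ζ ^ 2) * (1 - ζ ^ (r - 2))) *
    ((a : R) ^ 2 + (ζ + ζ ^ (r - 1)) * (a : R) * (b : R) + (b : R) ^ 2)

theorem Ideal.IsPrime.mem_and_mem_of_quadForms_mem {R : Type*} [CommRing R] {q : Ideal R}
    (hq : q.IsPrime) {s t x y : R} (hst : s - t ∉ q)
    (hs : x ^ 2 + s * x * y + y ^ 2 ∈ q) (ht : x ^ 2 + t * x * y + y ^ 2 ∈ q) :
    x ∈ q ∧ y ∈ q := by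
  have hxy : x * y ∈ q := by
    have : (s - t) * (x * y) ∈ q := by
      convert q.sub_mem hs ht using 1
      ring
    exact (hq.mem_or_mem this).resolve_left hst
  rcases hq.mem_or_mem hxy with hx | hy
  · refine ⟨hx, hq.mem_of_pow_mem 2 ?_⟩
    convert q.sub_mem hs (q.mul_mem_right (x + s * y) hx) using 1
    ring
  · refine ⟨hq.mem_of_pow_mem 2 ?_, hy⟩
    convert q.sub_mem hs (q.mul_mem_right (y + s * x) hy) using 1
    ring

theorem Ideal.IsPrime.not_mul_quadForms_mem {R : Type*} [CommRing R] {q : Ideal R}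
    (hq : q.IsPrime) {u v s t x y : R} (hxy : IsCoprime x y) (hu : u ∉ q) (hv : v ∉ q)
    (hst : s - t ∉ q) :
    ¬ (u * (x ^ 2 + s * x * y + y ^ 2) ∈ q ∧ v * (x ^ 2 + t * x * y + y ^ 2) ∈ q) := by
  rintro ⟨hs, ht⟩
  obtain ⟨hx, hy⟩ := hq.mem_and_mem_of_quadForms_mem hst
    ((hq.mem_or_mem hs).resolve_left hu) ((hq.mem_or_mem ht).resolve_left hv)
  obtain ⟨c, d, hcd⟩ := hxy
  exact hq.ne_top <| q.eq_top_iff_one.2 <|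
    hcd ▸ q.add_mem (q.mul_mem_left c hx) (q.mul_mem_left d hy)

theorem IsPrimitiveRoot.one_sub_pow_notMem {A : Type*} [CommRing A] [IsDomain A] {ζ : A}
    {n j : ℕ} (hζ : IsPrimitiveRoot ζ n) (hj : j.Coprime n) {q : Ideal A} (hq : q.IsPrime)
    (hmax : (Ideal.span {1 - ζ}).IsMaximal) (hqζ : q ≠ Ideal.span {1 - ζ}) :
    1 - ζ ^ j ∉ q := by
  intro hj_mem
  have hdvd : 1 - ζ ^ j ∣ 1 - ζ := by
    rw [← neg_sub ζ, ← neg_sub (ζ ^ j), neg_dvd, dvd_neg]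
    exact (hζ.associated_sub_one_pow_sub_one_of_coprime hj).symm.dvd
  have hle : Ideal.span {1 - ζ} ≤ q := by
    rw [Ideal.span_singleton_le_iff_mem]
    exact q.mem_of_dvd hdvd hj_mem
  exact hqζ (hmax.eq_of_le hq.ne_top hle).symm

theorem IsPrimitiveRoot.isMaximal_span_one_sub {r : ℕ} (hr : r.Prime) {K : Type*} [Field K]
    [CharZero K] [IsCyclotomicExtension {r} ℚ K] {ζ : 𝓞 K} (hζ : IsPrimitiveRoot ζ r) :
    (Ideal.span {1 - ζ}).IsMaximal := by
  have : Fact r.Prime := ⟨hr⟩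
  have : NumberField K := IsCyclotomicExtension.numberField {r} ℚ K
  have hζK : IsPrimitiveRoot (ζ : K) r := IsPrimitiveRoot.coe_submonoidClass_iff.mpr hζ
  have hζ_sub_one : Prime (ζ - 1) := hζK.zeta_sub_one_prime'
  have hprime : Prime (1 - ζ) := by simpa only [neg_sub] using hζ_sub_one.neg
  exact ((Ideal.span_singleton_prime hprime.ne_zero).2 hprime).isMaximal
    (by simpa [Ideal.span_singleton_eq_bot] using hprime.ne_zero)

theorem IsPrimitiveRoot.one_sub_pow_notMem_of_pos_of_lt {r : ℕ} (hr : r.Prime) {K : Type*}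
    [Field K] [CharZero K] [IsCyclotomicExtension {r} ℚ K] {ζ : 𝓞 K} (hζ : IsPrimitiveRoot ζ r)
    {q : Ideal (𝓞 K)} (hq : q.IsPrime) (hqr : q ≠ Ideal.span {1 - ζ}) {k : ℕ} (hk0 : 0 < k)
    (hkr : k < r) : 1 - ζ ^ k ∉ q :=
  hζ.one_sub_pow_notMem (hr.coprime_iff_not_dvd.2 (Nat.not_dvd_of_pos_of_lt hk0 hkr)).symm hq
    (hζ.isMaximal_span_one_sub hr) hqr

theorem two_sub_pow_add_pow_sub_eq_mul {R : Type*} [CommRing R] {ζ : R} {n k : ℕ}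
    (hζ : ζ ^ n = 1) (hk : k ≤ n) :
    2 - (ζ ^ k + ζ ^ (n - k)) = (1 - ζ ^ k) * (1 - ζ ^ (n - k)) := by
  have hinv : ζ ^ k * ζ ^ (n - k) = 1 := by rw [← pow_add, Nat.add_sub_cancel' hk, hζ]
  linear_combination -hinv

theorem sq_add_pow_sub_two_sub_eq_mul {R : Type*} [CommRing R] {ζ : R} {n : ℕ}
    (hζ : ζ ^ n = 1) (hn : 2 ≤ n) :
    ζ ^ 2 + ζ ^ (n - 2) - (ζ + ζ ^ (n - 1)) = ζ ^ (n - 2) * (1 - ζ) * (1 - ζ ^ 3) := by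
  obtain ⟨m, rfl⟩ := Nat.exists_eq_add_of_le' hn
  simp only [Nat.add_sub_cancel, show m + 2 - 1 = m + 1 by omega] at hζ ⊢
  linear_combination (ζ - ζ ^ 2) * hζ

theorem freyA_eq {R : Type*} [CommRing R] (r : ℕ) (ζ : R) (a b : ℤ) :
    freyA r ζ a b = ζ * (1 - ζ) * (1 - ζ ^ (r - 3)) * ((a : R) ^ 2 + 2 * a * b + (b : R) ^ 2) := by
  unfold freyA
  ring

/-- Let `r ≥ 5` be a prime, `ζ` a primitive `r`-th root of unity in the ring of
integers `ℤ[ζ]` of `ℚ(ζ_r)`, and `a, b` coprime integers. Every prime ideal `q` of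
`ℤ[ζ]` different from `(1−ζ)` divides at most one of `A_{a,b}`, `B_{a,b}`, `C_{a,b}`. -/
theorem stmt_15 (r : ℕ) (hr : r.Prime) (hr5 : 5 ≤ r)
    (K : Type*) [Field K] [CharZero K]
    [IsCyclotomicExtension {r} ℚ K]
    (ζ : 𝓞 K) (hζ : IsPrimitiveRoot ζ r)
    (a b : ℤ) (hab : IsCoprime a b)
    (q : Ideal (𝓞 K)) (hq : q.IsPrime) (hqr : q ≠ Ideal.span {1 - ζ}) :
    ¬ (freyA r ζ a b ∈ q ∧ freyB r ζ a b ∈ q) ∧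
    ¬ (freyA r ζ a b ∈ q ∧ freyC r ζ a b ∈ q) ∧
    ¬ (freyB r ζ a b ∈ q ∧ freyC r ζ a b ∈ q) := by
  have hone_sub : ∀ k, 0 < k → k < r → 1 - ζ ^ k ∉ q := fun _ hk0 hkr =>
    hζ.one_sub_pow_notMem_of_pos_of_lt hr hq hqr hk0 hkr
  have h1 : 1 - ζ ∉ q := by simpa using hone_sub 1 one_pos (by omega)
  have hζq : ∀ k, ζ ^ k ∉ q := fun k h =>
    hq.ne_top (q.eq_top_of_isUnit_mem h ((hζ.isUnit hr.ne_zero).pow k))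
  have hα : ζ * (1 - ζ) * (1 - ζ ^ (r - 3)) ∉ q :=
    hq.mul_notMem (hq.mul_notMem (by simpa using hζq 1) h1) (hone_sub _ (by omega) (by omega))
  have hβ : (1 - ζ) * (1 - ζ ^ (r - 1)) ∉ q :=
    hq.mul_notMem h1 (hone_sub _ (by omega) (by omega))
  have hγ : (1 - ζ ^ 2) * (1 - ζ ^ (r - 2)) ∉ q :=
    hq.mul_notMem (hone_sub 2 two_pos (by omega)) (hone_sub _ (by omega) (by omega))
  have hAB : 2 - (ζ ^ 2 + ζ ^ (r - 2)) ∉ q := by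
    rwa [two_sub_pow_add_pow_sub_eq_mul hζ.pow_eq_one (by omega)]
  have hAC : 2 - (ζ + ζ ^ (r - 1)) ∉ q := by
    have h := two_sub_pow_add_pow_sub_eq_mul hζ.pow_eq_one (k := 1) (by omega)
    rw [pow_one] at h
    rwa [h]
  have hBC : ζ ^ 2 + ζ ^ (r - 2) - (ζ + ζ ^ (r - 1)) ∉ q := by
    rw [sq_add_pow_sub_two_sub_eq_mul hζ.pow_eq_one (by omega)]
    exact hq.mul_notMem (hq.mul_notMem (hζq _) h1) (hone_sub 3 (by omega) (by omega))
  have hab' : IsCoprime (a : 𝓞 K) b := hab.intCast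
  rw [freyA_eq]
  exact ⟨hq.not_mul_quadForms_mem hab' hα hβ hAB,
    hq.not_mul_quadForms_mem hab' hα (q.neg_mem_iff.not.2 hγ) hAC,
    hq.not_mul_quadForms_mem hab' hβ (q.neg_mem_iff.not.2 hγ) hBC⟩
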